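/- For every finite group G, with n = |G| the order of G, one has n·C(G) ⊆ Φ(A(G)) ⊆ C(G), where Φ: A(G) → C(G) is the ghost map; in particular the cokernel of Φ is a finite abelian group. -/

import Mathlib

open MulAction Pointwise TensorProduct

universe u v


/-- A finite `G`-set: a finite type with a `G`-action. -/
structure FinGSet (G : Type) [Group G] : Type 1 where
  carrier : Type
  [fintype : Fintype carrier]
  [mulAction : MulAction G carrier]

attribute [instance] FinGSet.fintype FinGSet.mulAction

namespace FinGSet

variable {G : Type} [Group G]

instance sumAction (α β : Type) [MulAction G α] [MulAction G β] : MulAction G (α ⊕ β) where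
  smul g := Sum.map (g • ·) (g • ·)
  one_smul x := by cases x <;> simp [Sum.map, one_smul]
  mul_smul g h x := by cases x <;> simp [Sum.map, mul_smul]

/-- Disjoint union of finite `G`-sets. -/
def sum (S T : FinGSet G) : FinGSet G := ⟨S.carrier ⊕ T.carrier⟩

/-- Cartesian product of finite `G`-sets, with the diagonal action. -/
def prod (S T : FinGSet G) : FinGSet G := ⟨S.carrier × T.carrier⟩

/-- The one-point `G`-set. -/
def pt (G : Type) [Group G] : FinGSet G := ⟨PUnit⟩

/-- Equivariant bijection between two finite `G`-sets. -/
def Iso (S T : FinGSet G) : Prop :=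
  ∃ e : S.carrier ≃ T.carrier, ∀ (g : G) (x : S.carrier), e (g • x) = g • e x

end FinGSet

/-- The defining relations of the Burnside ring as a quotient of the free commutative
ring on the finite `G`-sets: addition is disjoint union, multiplication is
cartesian product, the one-point set is the unit, and isomorphic `G`-sets are equal. -/
def burnsideRels (G : Type) [Group G] : Set (FreeCommRing (FinGSet G)) :=
  {x | (∃ S T : FinGSet G, x =
          FreeCommRing.of (S.sum T) - FreeCommRing.of S - FreeCommRing.of T) ∨
       (∃ S T : FinGSet G, x =
          FreeCommRing.of (S.prod T) - FreeCommRing.of S * FreeCommRing.of T) ∨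
       (x = FreeCommRing.of (FinGSet.pt G) - 1) ∨
       (∃ S T : FinGSet G, S.Iso T ∧ x = FreeCommRing.of S - FreeCommRing.of T)}

/-- The Burnside ring of a group `G`: the Grothendieck ring of the semiring of
isomorphism classes of finite `G`-sets. -/
def BurnsideRing (G : Type) [Group G] : Type 1 :=
  FreeCommRing (FinGSet G) ⧸ Ideal.span (burnsideRels G)

noncomputable instance (G : Type) [Group G] : CommRing (BurnsideRing G) :=
  Ideal.Quotient.commRing _

/-- The class of a finite `G`-set in the Burnside ring. -/
noncomputable def BurnsideRing.mk {G : Type} [Group G] (S : FinGSet G) : BurnsideRing G :=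
  Ideal.Quotient.mk _ (FreeCommRing.of S)

/-- The conjugacy classes of subgroups of `G`. -/
def SubgroupConjClasses (G : Type) [Group G] : Type :=
  Quotient (MulAction.orbitRel (ConjAct G) (Subgroup G))

/-- The ghost ring of `G`: integer-valued functions on the conjugacy classes of
subgroups of `G`, with pointwise operations. -/
def GhostRing (G : Type) [Group G] : Type :=
  SubgroupConjClasses G → ℤ

instance (G : Type) [Group G] : CommRing (GhostRing G) := Pi.commRing

/-- The conjugacy class of a subgroup. -/
def SubgroupConjClasses.mk {G : Type} [Group G] (H : Subgroup G) : SubgroupConjClasses G :=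
  Quotient.mk (MulAction.orbitRel (ConjAct G) (Subgroup G)) H

/-- The table of marks of a finite `G`-set, as an element of the ghost ring:
the function whose value at the conjugacy class of a subgroup `H ≤ G` is the number
of `H`-fixed points. -/
def HasMarksOf {G : Type} [Group G] (f : GhostRing G) (S : FinGSet G) : Prop :=
  ∀ H : Subgroup G, f (SubgroupConjClasses.mk H) =
    Nat.card (MulAction.fixedPoints H S.carrier)

/-- The Burnside ring, identified with its image in the ghost ring under the
(injective) ghost map: the subring generated by the marks of finite `G`-sets. -/
def burnsideSubring (G : Type) [Group G] : Subring (GhostRing G) :=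
  Subring.closure {f : GhostRing G | ∃ S : FinGSet G, HasMarksOf f S}

/-!
The mark of `G ⧸ H` at `K` counts the cosets `gH` with `K ≤ gHg⁻¹`. It vanishes unless `K` is
subconjugate to `H`, and it is divisible by its value `e = |N_G(H) : H|` at `H`: the preimage in `G`
of the `K`-fixed cosets is stable under right multiplication by `N_G(H)`. Hence
`|G| • (marks (G ⧸ H) / e)` lies in the image of the ghost map, and it differs from the indicator
`|G| • δ_[H]` by an integral combination of the `|G| • δ_[K]` with `|K| < |H|`; induction on `|H|`
gives `|G| • C(G) ⊆ Φ(A(G))`. The cokernel is then a finitely generated abelian group killed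
by `|G|`, hence finite.
-/

namespace MulAction

variable {G X : Type*} [Group G] [MulAction G X]

theorem mem_fixedPoints_subgroup_iff_le_stabilizer {K : Subgroup G} {x : X} :
    x ∈ fixedPoints K X ↔ K ≤ stabilizer G x := by
  simp [mem_fixedPoints, SetLike.le_def, Subgroup.smul_def]

theorem stabilizer_smul_eq_conjAct_smul (g : G) (x : X) :
    stabilizer G (g • x) = ConjAct.toConjAct g • stabilizer G x := by
  ext h
  simp [Subgroup.mem_pointwise_smul_iff_inv_smul_mem, ConjAct.smul_def, mul_smul,
    inv_smul_eq_iff]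

theorem card_fixedPoints_conjAct_smul (c : ConjAct G) (K : Subgroup G) :
    Nat.card (fixedPoints (c • K : Subgroup G) X) = Nat.card (fixedPoints K X) :=
  Nat.card_congr <| .symm <| (toPerm (ConjAct.ofConjAct c) : Equiv.Perm X).subtypeEquiv
    fun x => by
      simp only [mem_fixedPoints_subgroup_iff_le_stabilizer, toPerm_apply,
        stabilizer_smul_eq_conjAct_smul, ConjAct.toConjAct_ofConjAct,
        Subgroup.pointwise_smul_le_pointwise_smul_iff]

end MulAction

theorem Subgroup.card_dvd_card_of_mul_mem {G : Type*} [Group G] (N : Subgroup G) {A : Set G}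
    (hA : ∀ g ∈ A, ∀ n ∈ N, g * n ∈ A) : Nat.card N ∣ Nat.card A := by
  have hA : A = QuotientGroup.mk ⁻¹' (QuotientGroup.mk '' A : Set (G ⧸ N)) := by
    ext g
    refine ⟨fun hg => ⟨g, hg, rfl⟩, ?_⟩
    rintro ⟨a, ha, hag⟩
    simpa using hA a ha _ (QuotientGroup.eq.1 hag)
  rw [hA, QuotientGroup.card_preimage_mk]
  exact dvd_mul_right _ _

namespace QuotientGroup

variable {G : Type*} [Group G] (H : Subgroup G)

theorem mk_mem_fixedPoints_iff {K : Subgroup G} {g : G} :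
    (g : G ⧸ H) ∈ fixedPoints K (G ⧸ H) ↔ K ≤ ConjAct.toConjAct g • H := by
  refine mem_fixedPoints_subgroup_iff_le_stabilizer.trans ?_
  rw [show (g : G ⧸ H) = g • ((1 : G) : G ⧸ H) by simp, stabilizer_smul_eq_conjAct_smul,
    stabilizer_quotient]

theorem exists_le_conjAct_smul_of_nonempty_fixedPoints {K : Subgroup G}
    (hK : (fixedPoints K (G ⧸ H)).Nonempty) : ∃ c : ConjAct G, K ≤ c • H := by
  obtain ⟨x, hx⟩ := hK
  obtain ⟨g, rfl⟩ := mk_surjective x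
  exact ⟨_, (mk_mem_fixedPoints_iff H).1 hx⟩

theorem card_normalizer_dvd_card_mul_card_fixedPoints (K : Subgroup G) :
    Nat.card (Subgroup.normalizer (H : Set G)) ∣ Nat.card H * Nat.card (fixedPoints K (G ⧸ H)) := by
  rw [← card_preimage_mk]
  refine Subgroup.card_dvd_card_of_mul_mem _ fun g hg n hn => ?_
  rw [Set.mem_preimage, mk_mem_fixedPoints_iff] at hg ⊢
  rwa [ConjAct.toConjAct_mul, mul_smul, Subgroup.conjAct_pointwise_smul_eq_self hn]

theorem card_mul_card_fixedPoints_self [Finite H] :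
    Nat.card H * Nat.card (fixedPoints H (G ⧸ H)) = Nat.card (Subgroup.normalizer (H : Set G)) := by
  rw [← card_preimage_mk]
  refine Nat.card_congr (Equiv.setCongr ?_)
  ext g
  exact Sylow.mem_fixedPoints_mul_left_cosets_iff_mem_normalizer

variable [Finite G]

theorem card_fixedPoints_self_dvd (K : Subgroup G) :
    Nat.card (fixedPoints H (G ⧸ H)) ∣ Nat.card (fixedPoints K (G ⧸ H)) := by
  refine Nat.dvd_of_mul_dvd_mul_left (Nat.card_pos (α := H)) ?_
  rw [card_mul_card_fixedPoints_self]
  exact card_normalizer_dvd_card_mul_card_fixedPoints H K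

theorem card_fixedPoints_self_dvd_card : Nat.card (fixedPoints H (G ⧸ H)) ∣ Nat.card G :=
  (Dvd.intro_left _ (card_mul_card_fixedPoints_self H)).trans (Subgroup.card_subgroup_dvd_card _)

theorem card_fixedPoints_self_pos : 0 < Nat.card (fixedPoints H (G ⧸ H)) :=
  have : Nonempty (fixedPoints H (G ⧸ H)) :=
    ⟨⟨((1 : G) : G ⧸ H), (mk_mem_fixedPoints_iff H).2 (by simp)⟩⟩
  Nat.card_pos

end QuotientGroup

instance (G : Type) [Group G] [Finite G] : Finite (SubgroupConjClasses G) :=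
  inferInstanceAs (Finite (Quotient _))

instance (G : Type) [Group G] [Finite G] : AddGroup.FG (GhostRing G) :=
  inferInstanceAs (AddGroup.FG (SubgroupConjClasses G → ℤ))

theorem SubgroupConjClasses.mk_surjective {G : Type} [Group G] :
    Function.Surjective (SubgroupConjClasses.mk (G := G)) :=
  Quotient.mk_surjective

theorem Subgroup.card_lt_of_le_conjAct_smul {G : Type} [Group G] [Finite G] {H K : Subgroup G}
    {c : ConjAct G} (hK : K ≤ c • H) (hne : SubgroupConjClasses.mk K ≠ SubgroupConjClasses.mk H) :
    Nat.card K < Nat.card H := by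
  have hcard : Nat.card (c • H : Subgroup G) = Nat.card H :=
    (Nat.card_congr (Subgroup.equivSMul c H).toEquiv).symm
  refine (hcard ▸ Subgroup.card_le_of_le hK).lt_of_ne fun h => hne <| Quotient.sound ?_
  exact ⟨c, (Subgroup.eq_of_le_of_card_ge hK (hcard.trans h.symm).le).symm⟩

theorem AddSubgroup.nsmul_mem_of_nsmul_single_mem {ι : Type*} [Finite ι] [DecidableEq ι]
    (S : AddSubgroup (ι → ℤ)) (n : ℕ) {f : ι → ℤ}
    (hf : ∀ i, f i ≠ 0 → n • Pi.single i 1 ∈ S) : n • f ∈ S := by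
  cases nonempty_fintype ι
  rw [← Finset.univ_sum_single f, Finset.smul_sum]
  refine S.sum_mem fun i _ => ?_
  by_cases h : f i = 0
  · simp [h]
  · convert S.zsmul_mem (hf i h) (f i) using 1
    ext j
    rcases eq_or_ne j i with rfl | hj <;> simp [*, mul_comm]

theorem QuotientAddGroup.finite_of_nsmul_mem {B : Type*} [AddCommGroup B] [AddGroup.FG B]
    (S : AddSubgroup B) {n : ℕ} (hn : n ≠ 0) (h : ∀ b, n • b ∈ S) : Finite (B ⧸ S) := by
  refine AddCommGroup.finite_of_fg_isAddTorsion _ fun q => ?_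
  induction q using QuotientAddGroup.induction_on with | _ b
  exact isOfFinAddOrder_iff_nsmul_eq_zero.2
    ⟨n, Nat.pos_of_ne_zero hn, (QuotientAddGroup.eq_zero_iff _).2 (by simpa using h b)⟩

namespace FinGSet

variable {G : Type} [Group G]

noncomputable def marks (S : FinGSet G) : GhostRing G :=
  Quotient.lift (fun H : Subgroup G => (Nat.card (fixedPoints H S.carrier) : ℤ)) <| by
    rintro _ K ⟨c, rfl⟩
    exact congrArg Nat.cast (card_fixedPoints_conjAct_smul c K)

theorem marks_mk (S : FinGSet G) (H : Subgroup G) :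
    S.marks (SubgroupConjClasses.mk H) = Nat.card (fixedPoints H S.carrier) :=
  rfl

theorem marks_sum (S T : FinGSet G) : (S.sum T).marks = S.marks + T.marks := by
  funext c
  obtain ⟨H, rfl⟩ := SubgroupConjClasses.mk_surjective c
  have e : fixedPoints H (S.sum T).carrier ≃ fixedPoints H S.carrier ⊕ fixedPoints H T.carrier :=
    Equiv.subtypeSum.trans <|
      .sumCongr (.subtypeEquivRight fun _ => forall_congr' fun _ => Sum.inl_injective.eq_iff)
        (.subtypeEquivRight fun _ => forall_congr' fun _ => Sum.inr_injective.eq_iff)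
  show (Nat.card _ : ℤ) = Nat.card _ + Nat.card _
  rw [Nat.card_congr e, Nat.card_sum, Nat.cast_add]

theorem marks_prod (S T : FinGSet G) : (S.prod T).marks = S.marks * T.marks := by
  funext c
  obtain ⟨H, rfl⟩ := SubgroupConjClasses.mk_surjective c
  have e : fixedPoints H (S.prod T).carrier ≃ fixedPoints H S.carrier × fixedPoints H T.carrier :=
    (Equiv.subtypeEquivRight fun _ => (forall_congr' fun _ => Prod.ext_iff).trans forall_and).trans
      (Equiv.subtypeProdEquivProd (p := (· ∈ fixedPoints H S.carrier))
        (q := (· ∈ fixedPoints H T.carrier)))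
  show (Nat.card _ : ℤ) = Nat.card _ * Nat.card _
  rw [Nat.card_congr e, Nat.card_prod, Nat.cast_mul]

theorem marks_pt : (pt G).marks = 1 := by
  funext c
  obtain ⟨H, rfl⟩ := SubgroupConjClasses.mk_surjective c
  have : Unique (fixedPoints H (pt G).carrier) := ⟨⟨⟨.unit, fun _ => rfl⟩⟩, fun _ => rfl⟩
  exact congrArg Nat.cast Nat.card_unique

theorem marks_eq_of_iso {S T : FinGSet G} (h : S.Iso T) : S.marks = T.marks := by
  obtain ⟨e, he⟩ := h
  funext c
  obtain ⟨H, rfl⟩ := SubgroupConjClasses.mk_surjective c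
  exact congrArg Nat.cast <| Nat.card_congr <| e.subtypeEquiv fun x => by
    simp [mem_fixedPoints, ← he, e.apply_eq_iff_eq]

noncomputable def cosets [Finite G] (H : Subgroup G) : FinGSet G :=
  letI := Fintype.ofFinite (G ⧸ H)
  ⟨G ⧸ H⟩

end FinGSet

theorem burnsideRels_subset_ker_lift_marks (G : Type) [Group G] :
    burnsideRels G ⊆ RingHom.ker (FreeCommRing.lift (FinGSet.marks (G := G))) := by
  rintro x (⟨S, T, rfl⟩ | ⟨S, T, rfl⟩ | rfl | ⟨S, T, hST, rfl⟩)
  · simp [FinGSet.marks_sum]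
  · simp [FinGSet.marks_prod]
  · simp [FinGSet.marks_pt]
  · simp [FinGSet.marks_eq_of_iso hST]

noncomputable def ghostMap (G : Type) [Group G] : BurnsideRing G →+* GhostRing G :=
  Ideal.Quotient.lift _ (FreeCommRing.lift FinGSet.marks) fun _ hx =>
    Ideal.span_le.2 (burnsideRels_subset_ker_lift_marks G) hx

theorem ghostMap_mk {G : Type} [Group G] (S : FinGSet G) :
    ghostMap G (BurnsideRing.mk S) = S.marks :=
  (Ideal.Quotient.lift_mk _ _ _).trans (FreeCommRing.lift_of _ S)

section

variable {G : Type} [Group G] [Fintype G]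

theorem card_nsmul_single_mem_range_ghostMap [DecidableEq (SubgroupConjClasses G)]
    (H : Subgroup G) :
    Fintype.card G • (Pi.single (SubgroupConjClasses.mk H) 1 : GhostRing G) ∈
      (ghostMap G).range := by
  induction hH : Nat.card H using Nat.strong_induction_on generalizing H with | _ k ih
  subst hH
  set δ : GhostRing G := Pi.single (SubgroupConjClasses.mk H) 1
  let e : ℤ := Nat.card (fixedPoints H (G ⧸ H))
  let g : GhostRing G := fun c => (FinGSet.cosets H).marks c / e
  have hg : e • g = (FinGSet.cosets H).marks := by
    funext c
    obtain ⟨K, rfl⟩ := SubgroupConjClasses.mk_surjective c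
    exact Int.mul_ediv_cancel' (Int.natCast_dvd_natCast.2
      (QuotientGroup.card_fixedPoints_self_dvd H K))
  have hg_mem : Fintype.card G • g ∈ (ghostMap G).range := by
    obtain ⟨d, hd⟩ := QuotientGroup.card_fixedPoints_self_dvd_card H
    rw [show Fintype.card G • g = d • (FinGSet.cosets H).marks by
      rw [← hg, ← Nat.card_eq_fintype_card, hd, mul_comm, mul_smul, natCast_zsmul], ← ghostMap_mk]
    exact nsmul_mem ((ghostMap G).mem_range_self _) d
  have hgH : g (SubgroupConjClasses.mk H) = 1 :=
    Int.ediv_self (Int.natCast_ne_zero.2 (QuotientGroup.card_fixedPoints_self_pos H).ne')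
  have hrest : Fintype.card G • (g - δ) ∈ (ghostMap G).range := by
    refine AddSubgroup.nsmul_mem_of_nsmul_single_mem (ghostMap G).range.toAddSubgroup _
      fun c hc => ?_
    obtain ⟨K, rfl⟩ := SubgroupConjClasses.mk_surjective c
    change g _ - δ _ ≠ 0 at hc
    have hne : SubgroupConjClasses.mk K ≠ SubgroupConjClasses.mk H := by
      rintro h
      simp [δ, h, hgH] at hc
    have hK : (FinGSet.cosets H).marks (SubgroupConjClasses.mk K) ≠ 0 := by
      contrapose! hc
      simp [g, δ, hc, hne]
    obtain ⟨c, hle⟩ := QuotientGroup.exists_le_conjAct_smul_of_nonempty_fixedPoints H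
      (Set.nonempty_coe_sort.1 (Nat.card_ne_zero.1 (Nat.cast_ne_zero.1 hK)).1)
    exact ih _ (Subgroup.card_lt_of_le_conjAct_smul hle hne) K rfl
  have := sub_mem hg_mem hrest
  rwa [← smul_sub, sub_sub_cancel] at this

theorem card_nsmul_mem_range_ghostMap (f : GhostRing G) :
    Fintype.card G • f ∈ (ghostMap G).range := by
  classical
  refine AddSubgroup.nsmul_mem_of_nsmul_single_mem (ghostMap G).range.toAddSubgroup _ fun c _ => ?_
  obtain ⟨H, rfl⟩ := SubgroupConjClasses.mk_surjective c
  exact card_nsmul_single_mem_range_ghostMap H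

end

/-- n·C(G) ⊆ Φ(A(G)) ⊆ C(G) for n = |G|; the cokernel of Φ is finite. -/
theorem ghostMap_cokernel (G : Type) [Group G] [Fintype G] :
    ∃ Φ : BurnsideRing G →+* GhostRing G,
      (∀ S : FinGSet G, HasMarksOf (Φ (BurnsideRing.mk S)) S) ∧
      (∀ f : GhostRing G, (Fintype.card G) • f ∈ Set.range Φ) ∧
      Finite (GhostRing G ⧸ (Φ.toAddMonoidHom.range)) := by
  refine ⟨ghostMap G, fun S => ?_, card_nsmul_mem_range_ghostMap, ?_⟩
  · rw [ghostMap_mk]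
    exact S.marks_mk
  · exact QuotientAddGroup.finite_of_nsmul_mem _ Fintype.card_ne_zero card_nsmul_mem_range_ghostMap
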